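/- arXiv:2202.13265 — 9 statements merged into one kernel-verified Lean document; each statement's English description precedes it below -/
import Mathlib

section
/- Let M be a totally unimodular real matrix with columns indexed by a finite set E, and let λ be an element of ker(M) whose support is a circuit (i.e., the columns indexed by supp(λ) are minimally linearly dependent). Then λ = k·γ for some real number k and some vector γ ∈ ker(M) all of whose coordinates lie in {-1, 0, 1}. -/
/-!
Fix `e₀` in the support of `λ`. The columns indexed by the rest of the support are independent,
so for a suitable choice of rows they form a nonsingular square submatrix `A`, whose determinant
is `±1` by total unimodularity. On those rows the kernel equation reads
`A x = -λ e₀ • M[·, e₀]`, and Cramer's rule gives `det A * λ e = -λ e₀ * det A'`, where `A'`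
(column `e` of `A` replaced by column `e₀`) is again a square submatrix of `M`.
Hence `λ e ∈ {0, λ e₀, -λ e₀}` for every `e`.
-/

open Matrix

namespace Matrix

variable {K m n ι : Type*} [Field K]

theorem exists_det_submatrix_ne_zero_of_linearIndependent_col [Fintype m] [Fintype ι]
    [DecidableEq ι] {B : Matrix m ι K} (h : LinearIndependent K B.col) :
    ∃ f : ι → m, (B.submatrix f id).det ≠ 0 := by
  have hspan : Submodule.span K (Set.range B.row) = ⊤ := by
    apply Submodule.eq_top_of_finrank_eq
    rw [← rank_eq_finrank_span_row, ← rank_transpose, h.rank_matrix,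
      Module.finrank_fintype_fun_eq_card]
  obtain ⟨κ, a, -, hspan', hli⟩ := exists_linearIndependent' K B.row
  let b := Module.Basis.mk hli (by rw [hspan', hspan])
  let e : ι ≃ κ := (Pi.basisFun K ι).indexEquiv b
  refine ⟨a ∘ e, fun h0 => ?_⟩
  have hrows : LinearIndependent K (B.submatrix (a ∘ e) id).row := hli.comp e e.injective
  exact ((isUnit_iff_isUnit_det _).mp (linearIndependent_rows_iff_isUnit.mp hrows)).ne_zero h0

theorem cramer_mulVec [Fintype ι] [DecidableEq ι] (A : Matrix ι ι K) (x : ι → K) :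
    cramer A (A *ᵥ x) = A.det • x := by
  rw [cramer_eq_adjugate_mulVec, mulVec_mulVec, adjugate_mul, smul_mulVec, one_mulVec]

theorem submatrix_update_eq_updateCol {α : Type*} [DecidableEq ι] (M : Matrix m n α)
    (f : ι → m) (g : ι → n) (i : ι) (e : n) :
    M.submatrix f (Function.update g i e) =
      (M.submatrix f g).updateCol i (fun j => M (f j) e) := by
  ext j k
  by_cases hk : k = i
  · subst hk; simp
  · simp [hk]

end Matrix

theorem SignType.exists_eq_mul_of_mul_eq {K : Type*} [Field K] {a b : SignType} (ha : a ≠ 0)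
    {x y : K} (h : a * x = y * b) : ∃ s : SignType, x = s * y := by
  have haa : (a : K) * a = 1 := by rcases a with _ | _ | _ <;> simp_all
  refine ⟨a * b, ?_⟩
  calc x = a * (a * x) := by rw [← mul_assoc, haa, one_mul]
    _ = (a * b : SignType) * y := by rw [h]; push_cast; ring

namespace Matrix.IsTotallyUnimodular

variable {K m n : Type*} [Field K] [Fintype m] [Fintype n] {M : Matrix m n K}

theorem exists_signType_mul_eq (hM : M.IsTotallyUnimodular) {lam : n → K} (hker : M *ᵥ lam = 0)
    {e₀ : n} (hli : LinearIndependent K (fun e : ({e | lam e ≠ 0} \ {e₀} : Set n) => M.col e))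
    (e : n) : ∃ s : SignType, lam e = s * lam e₀ := by
  classical
  rcases eq_or_ne e e₀ with rfl | he₀
  · exact ⟨1, by simp⟩
  by_cases he : lam e = 0
  · exact ⟨0, by simp [he]⟩
  set T : Set n := {e | lam e ≠ 0} \ {e₀}
  obtain ⟨f, hA⟩ :=
    exists_det_submatrix_ne_zero_of_linearIndependent_col (B := M.submatrix id ((↑) : T → n)) hli
  set A := M.submatrix f ((↑) : T → n)
  set c : T → K := fun j => M (f j) e₀
  have hsys : A *ᵥ (fun j => lam j) = -lam e₀ • c := by
    ext j
    set F : n → K := fun e => M (f j) e * lam e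
    have hrow : ∑ e, F e = 0 := congrFun hker (f j)
    have hsplit : ∑ e, F e = F e₀ + ∑ k : T, F k := by
      rw [Finset.sum_set_coe, ← Finset.sum_insert (by simp)]
      refine (Finset.sum_subset (Finset.subset_univ _) fun e _ he => ?_).symm
      have : lam e = 0 := by by_contra h; simp_all [T]
      simp [F, this]
    simp only [mulVec, dotProduct, A, c, Pi.smul_apply, smul_eq_mul, submatrix_apply]
    linear_combination hrow - hsplit
  set i : T := ⟨e, he, he₀⟩
  have hcramer : A.det * lam e = lam e₀ * -(M.submatrix f (Function.update (↑) i e₀)).det := by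
    have := congrFun (cramer_mulVec A (fun j => lam j)) i
    rw [hsys, map_smul, Pi.smul_apply, cramer_apply, ← submatrix_update_eq_updateCol] at this
    simp only [Pi.smul_apply, smul_eq_mul] at this
    linear_combination -this
  rw [isTotallyUnimodular_iff_fintype] at hM
  obtain ⟨a, ha⟩ := hM T f (↑)
  obtain ⟨b, hb⟩ := hM T f (Function.update (↑) i e₀)
  rw [← ha, ← hb, ← SignType.coe_neg] at hcramer
  exact SignType.exists_eq_mul_of_mul_eq (by rintro rfl; exact hA ha.symm) hcramer

theorem exists_eq_smul_of_circuit (hM : M.IsTotallyUnimodular) {lam : n → K}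
    (hker : M *ᵥ lam = 0)
    (hmin : ∀ s : Set n, s ⊂ {e | lam e ≠ 0} → LinearIndependent K (fun e : s => M.col e)) :
    ∃ (k : K) (γ : n → K), M *ᵥ γ = 0 ∧ (∀ e, γ e ∈ Set.range SignType.cast) ∧ lam = k • γ := by
  rcases eq_or_ne lam 0 with rfl | hlam0
  · exact ⟨0, 0, mulVec_zero M, fun _ => ⟨0, rfl⟩, (zero_smul K 0).symm⟩
  obtain ⟨e₀, he₀⟩ := Function.ne_iff.mp hlam0
  choose s hs using hM.exists_signType_mul_eq hker (hmin _ (Set.sdiff_singleton_ssubset.mpr he₀))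
  have hlam : lam = lam e₀ • fun e => (s e : K) := funext fun e => by simp [hs e, mul_comm]
  refine ⟨lam e₀, fun e => s e, ?_, fun e => ⟨s e, rfl⟩, hlam⟩
  rw [hlam, mulVec_smul] at hker
  exact (smul_eq_zero.mp hker).resolve_left he₀

end Matrix.IsTotallyUnimodular

theorem stmt_0_general {V E : Type*} [Fintype V] [Fintype E]
    (M : Matrix V E ℝ)
    (hTU : ∀ (k : ℕ) (f : Fin k → V) (g : Fin k → E),
      (M.submatrix f g).det = 1 ∨ (M.submatrix f g).det = 0 ∨ (M.submatrix f g).det = -1)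
    (lam : E → ℝ) (hker : M.mulVec lam = 0)
    (hmin : ∀ s : Set E, s ⊂ {e : E | lam e ≠ 0} →
      LinearIndependent ℝ (fun e : s => fun v => M v e.1)) :
    ∃ (k : ℝ) (γ : E → ℝ), M.mulVec γ = 0 ∧
      (∀ e, γ e = -1 ∨ γ e = 0 ∨ γ e = 1) ∧ lam = k • γ := by
  have hM : M.IsTotallyUnimodular := (isTotallyUnimodular_iff M).mpr fun k f g => by
    rcases hTU k f g with h | h | h <;> rw [h]
    exacts [⟨1, rfl⟩, ⟨0, rfl⟩, ⟨-1, rfl⟩]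
  obtain ⟨k, γ, hγ, hsign, hlam⟩ := hM.exists_eq_smul_of_circuit hker hmin
  refine ⟨k, γ, hγ, fun e => ?_, hlam⟩
  obtain ⟨s, hs⟩ := hsign e
  rcases s with _ | _ | _ <;> simp [← hs]

/-- A kernel vector of a totally unimodular matrix whose support is a
circuit (minimally linearly dependent set of columns) is a scalar multiple of an
Eulerian vector (all coordinates in {-1,0,1}). -/
theorem stmt_0 {V E : Type*} [Fintype V] [Fintype E]
    (M : Matrix V E ℝ)
    (hTU : ∀ (k : ℕ) (f : Fin k → V) (g : Fin k → E),
      (M.submatrix f g).det = 1 ∨ (M.submatrix f g).det = 0 ∨ (M.submatrix f g).det = -1)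
    (lam : E → ℝ) (hker : M.mulVec lam = 0)
    (hdep : ¬ LinearIndependent ℝ (fun e : {e : E // lam e ≠ 0} => fun v => M v e.1))
    (hmin : ∀ s : Set E, s ⊂ {e : E | lam e ≠ 0} →
      LinearIndependent ℝ (fun e : s => fun v => M v e.1)) :
    ∃ (k : ℝ) (γ : E → ℝ), M.mulVec γ = 0 ∧
      (∀ e, γ e = -1 ∨ γ e = 0 ∨ γ e = 1) ∧ lam = k • γ :=
  stmt_0_general M hTU lam hker hmin
end

section
/- Let Λ be a lattice (discrete subgroup) in a finite-dimensional real inner product space F, and for λ ∈ Λ let V_λ = {x ∈ F : ‖x - λ‖ ≤ ‖x - μ‖ for all μ ∈ Λ} be its Voronoi cell. Then for any λ ∈ Λ, V_λ ∩ V_0 ≠ ∅ if and only if λ/2 ∈ V_λ ∩ V_0. -/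
/-!
The cell `V_0` is convex (an intersection of half-spaces), symmetric under `x ↦ -x`, and
`V_λ = λ + V_0`. If `x ∈ V_λ ∩ V_0`, then `x` and `λ - x` both lie in `V_0`, hence so does their
midpoint `λ/2`; by symmetry `-λ/2 ∈ V_0` as well, i.e. `λ/2 ∈ V_λ`.
-/

open RealInnerProductSpace

section Voronoi

variable {F : Type*} [NormedAddCommGroup F]

def voronoiCell (S : Set F) (c : F) : Set F :=
  {x | ∀ μ ∈ S, ‖x - c‖ ≤ ‖x - μ‖}

theorem neg_mem_voronoiCell_zero {Λ : AddSubgroup F} {x : F}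
    (hx : x ∈ voronoiCell (Λ : Set F) 0) : -x ∈ voronoiCell (Λ : Set F) 0 := by
  intro μ hμ
  rw [sub_zero, norm_neg, show -x - μ = -(x - -μ) by abel, norm_neg]
  simpa using hx (-μ) (neg_mem hμ)

theorem mem_voronoiCell_iff_sub_mem {Λ : AddSubgroup F} {l x : F} (hl : l ∈ Λ) :
    x ∈ voronoiCell (Λ : Set F) l ↔ x - l ∈ voronoiCell (Λ : Set F) 0 := by
  refine ⟨fun hx μ hμ => ?_, fun hx μ hμ => ?_⟩
  · simpa [sub_sub] using hx (l + μ) (add_mem hl hμ)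
  · simpa using hx (μ - l) (sub_mem hμ hl)

variable [InnerProductSpace ℝ F]

theorem norm_sub_le_norm_sub_iff_inner_le (x c μ : F) :
    ‖x - c‖ ≤ ‖x - μ‖ ↔ 2 * ⟪μ - c, x⟫ ≤ ‖μ‖ ^ 2 - ‖c‖ ^ 2 := by
  rw [← sq_le_sq₀ (norm_nonneg _) (norm_nonneg _), norm_sub_sq_real, norm_sub_sq_real,
    inner_sub_left, real_inner_comm x μ, real_inner_comm x c]
  constructor <;> intro h <;> linarith

theorem convex_voronoiCell (S : Set F) (c : F) : Convex ℝ (voronoiCell S c) := by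
  have hcell : voronoiCell S c = ⋂ μ ∈ S, {x | 2 * ⟪μ - c, x⟫ ≤ ‖μ‖ ^ 2 - ‖c‖ ^ 2} := by
    ext x
    simp [voronoiCell, norm_sub_le_norm_sub_iff_inner_le]
  rw [hcell]
  exact convex_iInter₂ fun μ _ =>
    convex_halfSpace_le ((2 : ℝ) • innerₛₗ ℝ (μ - c)).isLinear _

end Voronoi

theorem stmt_1_general {F : Type*} [NormedAddCommGroup F] [InnerProductSpace ℝ F]
    (Λ : AddSubgroup F)
    (l : F) (hl : l ∈ Λ) :
    ({x : F | ∀ μ ∈ Λ, ‖x - l‖ ≤ ‖x - μ‖} ∩ {x : F | ∀ μ ∈ Λ, ‖x - 0‖ ≤ ‖x - μ‖}).Nonempty ↔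
      (1 / 2 : ℝ) • l ∈
        ({x : F | ∀ μ ∈ Λ, ‖x - l‖ ≤ ‖x - μ‖} ∩ {x : F | ∀ μ ∈ Λ, ‖x - 0‖ ≤ ‖x - μ‖}) := by
  change (voronoiCell (Λ : Set F) l ∩ voronoiCell Λ 0).Nonempty ↔
    (1 / 2 : ℝ) • l ∈ voronoiCell (Λ : Set F) l ∩ voronoiCell Λ 0
  refine ⟨fun ⟨x, hxl, hx0⟩ => ?_, fun h => ⟨_, h⟩⟩
  have hlx : l - x ∈ voronoiCell (Λ : Set F) 0 := by
    simpa using neg_mem_voronoiCell_zero ((mem_voronoiCell_iff_sub_mem hl).1 hxl)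
  have hmid : (1 / 2 : ℝ) • l ∈ voronoiCell (Λ : Set F) 0 := by
    convert convex_voronoiCell _ _ hx0 hlx (a := 1 / 2) (b := 1 / 2) (by norm_num) (by norm_num)
      (by norm_num) using 1
    module
  refine ⟨(mem_voronoiCell_iff_sub_mem hl).2 ?_, hmid⟩
  convert neg_mem_voronoiCell_zero hmid using 1
  module

/-- For a lattice Λ in a finite-dimensional real inner product space,
the Voronoi cells of λ and 0 intersect iff λ/2 lies in their intersection. -/
theorem stmt_1 {F : Type*} [NormedAddCommGroup F] [InnerProductSpace ℝ F]
    [FiniteDimensional ℝ F]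
    (Λ : AddSubgroup F) (hdisc : DiscreteTopology Λ)
    (l : F) (hl : l ∈ Λ) :
    ({x : F | ∀ μ ∈ Λ, ‖x - l‖ ≤ ‖x - μ‖} ∩ {x : F | ∀ μ ∈ Λ, ‖x - 0‖ ≤ ‖x - μ‖}).Nonempty ↔
      (1 / 2 : ℝ) • l ∈
        ({x : F | ∀ μ ∈ Λ, ‖x - l‖ ≤ ‖x - μ‖} ∩ {x : F | ∀ μ ∈ Λ, ‖x - 0‖ ≤ ‖x - μ‖}) :=
  stmt_1_general Λ l hl
end

section
/- Let G be a finite directed graph with signed incidence matrix M. Suppose that for every edge e = (u,v) of G there exists z_e ∈ (ℤ_{≥0})^E with e + z_e ∈ ker(M) ∩ ℤ^E (i.e., every edge is part of a positive integer cycle). Then G is strongly connected as a directed graph: for every directed edge e = (u,v) there is a directed path in G from v to u. -/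
/-!
Let `w = e + z_e`, a nonnegative flow with `w e ≥ 1`, and let `S` be the set of vertices reachable
from the head of `e`. No edge leaves `S`, so summing the conservation law `M w = 0` over `S`
shows that the total flow on edges entering `S` is zero. Since `w e > 0`, the edge `e` does not
enter `S`, i.e. its tail lies in `S`.
-/

/-- The signed incidence matrix of a finite directed graph. -/
def signedInc {V E : Type*} [DecidableEq V] (src tgt : E → V) : Matrix V E ℝ :=
  fun v e => (if tgt e = v then (1 : ℝ) else 0) - (if src e = v then (1 : ℝ) else 0)

open scoped Matrix

section Flow

variable {V E : Type*} [Fintype E] [DecidableEq V] (src tgt : E → V)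

theorem sum_signedInc_mulVec (w : E → ℝ) (S : Finset V) :
    ∑ v ∈ S, (signedInc src tgt *ᵥ w) v =
      ∑ f, w f * ((if tgt f ∈ S then 1 else 0) - (if src f ∈ S then 1 else 0)) := by
  simp only [Matrix.mulVec, dotProduct, signedInc]
  rw [Finset.sum_comm]
  refine Finset.sum_congr rfl fun f _ => ?_
  rw [← Finset.sum_mul, Finset.sum_sub_distrib, Finset.sum_ite_eq, Finset.sum_ite_eq, mul_comm]

theorem flow_eq_zero_of_tgt_mem_of_src_notMem {w : E → ℝ} (hw : ∀ f, 0 ≤ w f)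
    (hflow : signedInc src tgt *ᵥ w = 0) {S : Finset V}
    (hS : ∀ f, src f ∈ S → tgt f ∈ S) {f : E} (htgt : tgt f ∈ S) (hsrc : src f ∉ S) :
    w f = 0 := by
  have hterm_nonneg : ∀ g ∈ Finset.univ,
      0 ≤ w g * ((if tgt g ∈ S then 1 else 0) - (if src g ∈ S then 1 else 0)) := by
    intro g _
    by_cases hg : src g ∈ S
    · simp [hg, hS g hg]
    · rw [if_neg hg, sub_zero]
      exact mul_nonneg (hw g) (by split_ifs <;> norm_num)
  have hsum := sum_signedInc_mulVec src tgt w S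
  simp only [hflow, Pi.zero_apply, Finset.sum_const_zero] at hsum
  rw [eq_comm, Finset.sum_eq_zero_iff_of_nonneg hterm_nonneg] at hsum
  simpa [htgt, hsrc] using hsum f (Finset.mem_univ f)

end Flow

/-- If every edge e of a finite directed graph is part of a positive
integer cycle (there is a nonnegative integer z_e with e + z_e ∈ ker(M) ∩ ℤ^E), then
the graph is strongly connected: for every edge e there is a directed path from its
head to its tail. -/
theorem stmt_4 {V E : Type*} [Fintype V] [Fintype E] [DecidableEq V] [DecidableEq E]
    (src tgt : E → V)
    (hpos : ∀ e : E, ∃ z : E → ℤ, (∀ f, 0 ≤ z f) ∧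
      (signedInc src tgt).mulVec (fun f => (if f = e then (1 : ℝ) else 0) + (z f : ℝ)) = 0) :
    ∀ e : E, Relation.ReflTransGen
      (fun x y : V => ∃ f : E, src f = x ∧ tgt f = y) (tgt e) (src e) := by
  classical
  intro e
  obtain ⟨z, hz, hflow⟩ := hpos e
  have hz_real : ∀ f, (0 : ℝ) ≤ z f := fun f => by exact_mod_cast hz f
  let S : Finset V := {v | Relation.ReflTransGen (fun x y => ∃ f, src f = x ∧ tgt f = y) (tgt e) v}
  have hS : ∀ f, src f ∈ S → tgt f ∈ S := by
    intro f hf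
    simp only [S, Finset.mem_filter, Finset.mem_univ, true_and] at hf ⊢
    exact hf.tail ⟨f, rfl, rfl⟩
  by_contra hsrc
  have hw_nonneg : ∀ f, 0 ≤ (if f = e then (1 : ℝ) else 0) + z f :=
    fun f => add_nonneg (by split_ifs <;> norm_num) (hz_real f)
  have hwe := flow_eq_zero_of_tgt_mem_of_src_notMem src tgt hw_nonneg hflow hS (f := e)
    (by simp [S, Relation.ReflTransGen.refl]) (by simpa [S] using hsrc)
  simp only [if_true] at hwe
  linarith [hz_real e]
end

section
/- Let M be a totally unimodular matrix over ℝ with columns indexed by E, let Λ = ker(M) ∩ ℤ^E, and let λ ∈ Λ. If the Voronoi cells satisfy V_λ ∩ V_0 ≠ ∅ (Voronoi cells taken inside the real vector space ker(M) with the Euclidean inner product), then λ is Eulerian, i.e., every coordinate of λ lies in {-1, 0, 1}. -/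
/-- Membership in the lattice of integer flows Λ = ker(M) ∩ ℤ^E. -/
def latMem {V E : Type*} [Fintype E] (M : Matrix V E ℝ) (x : E → ℝ) : Prop :=
  M.mulVec x = 0 ∧ ∀ e, ∃ n : ℤ, x e = n

/-!
Suppose some `|λ e| ≥ 2` and let `k = max_e |λ e|`. The box `⌊λ/k⌋ ≤ z ≤ ⌈λ/k⌉` cut out of the
kernel of `M` is a nonempty polytope whose vertices are integral, because the fractional columns
at a vertex are independent and total unimodularity makes Cramer's rule integral. A vertex `γ`
is a flow in `Λ` with entries in `{0, ±1}`, conformal to `λ`, and equal to `sign λ e` where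
`|λ e| = k`; hence `⟨γ, λ - γ⟩ > 0`. On the other hand a common point `x` of `V_0` and `V_λ`
satisfies `‖x‖ ≤ ‖x - γ‖` and `‖x - λ‖ ≤ ‖x - (λ - γ)‖`, and adding these gives
`⟨γ, λ - γ⟩ ≤ 0`.
-/

open Matrix Finset Filter Topology

lemma eq_zero_of_mem_extremePoints_of_eventually_add_smul_mem {E : Type*} [AddCommGroup E]
    [Module ℝ E] {P : Set E} {z d : E} (hz : z ∈ P.extremePoints ℝ)
    (hd : ∀ᶠ t in 𝓝 (0 : ℝ), z + t • d ∈ P) : d = 0 := by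
  have hboth : ∀ᶠ t in 𝓝[>] (0 : ℝ), 0 < t ∧ z + t • d ∈ P ∧ z + (-t) • d ∈ P :=
    (eventually_mem_nhdsWithin (s := Set.Ioi 0)).and <| nhdsWithin_le_nhds <|
      hd.and ((continuous_neg.tendsto' 0 0 neg_zero).eventually hd)
  obtain ⟨t, ht, hplus, hminus⟩ := hboth.exists
  have hmid : z ∈ openSegment ℝ (z + t • d) (z + (-t) • d) :=
    ⟨1 / 2, 1 / 2, by norm_num, by norm_num, by norm_num, by module⟩
  simpa [ht.ne'] using hz.2 hplus hminus hmid

namespace Matrix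

variable {m n K : Type*} [Field K]

lemma IsTotallyUnimodular.updateRow_single [Fintype n] [DecidableEq n] {A : Matrix n n K}
    (hA : A.IsTotallyUnimodular) (i j : n) :
    (A.updateRow j (Pi.single i 1)).IsTotallyUnimodular := by
  have hAB : (A.fromRows (replicateRow Unit (Pi.single i 1))).IsTotallyUnimodular :=
    hA.fromRows_unitlike fun _ _ => ⟨i, 1, by ext; simp [replicateRow]⟩
  convert hAB.submatrix (fun r => if r = j then Sum.inr () else Sum.inl r) id using 1
  ext r c
  by_cases hr : r = j <;> simp [hr, updateRow_apply]

lemma IsTotallyUnimodular.det_mem [Fintype n] [DecidableEq n] {A : Matrix n n K}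
    (hA : A.IsTotallyUnimodular) : A.det ∈ Set.range SignType.cast := by
  simpa using (isTotallyUnimodular_iff_fintype A).1 hA n id id

lemma IsTotallyUnimodular.inv_apply_mem [Fintype n] [DecidableEq n] {A : Matrix n n K}
    (hA : A.IsTotallyUnimodular) (i j : n) : A⁻¹ i j ∈ Set.range SignType.cast := by
  obtain ⟨s, hs⟩ := hA.det_mem
  obtain ⟨t, ht⟩ := (hA.updateRow_single i j).det_mem
  refine ⟨s * t, ?_⟩
  rw [inv_def, smul_apply, adjugate_apply, ← hs, ← ht, smul_eq_mul]
  cases s <;> simp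

lemma IsTotallyUnimodular.exists_intCast_of_det_ne_zero [Fintype n] [DecidableEq n]
    {A : Matrix n n K} (hA : A.IsTotallyUnimodular) (hdet : A.det ≠ 0) {z : n → K}
    (hz : ∀ i, ∃ c : ℤ, (A *ᵥ z) i = c) (i : n) : ∃ c : ℤ, z i = c := by
  choose c hc using hz
  choose s hs using hA.inv_apply_mem
  refine ⟨∑ j, (s i j : ℤ) * c j, ?_⟩
  calc z i = (A⁻¹ *ᵥ (A *ᵥ z)) i := by
        rw [mulVec_mulVec, nonsing_inv_mul A (Ne.isUnit hdet), one_mulVec]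
    _ = ∑ j, A⁻¹ i j * (A *ᵥ z) j := rfl
    _ = _ := by simp [hs, hc]

lemma exists_submatrix_det_ne_zero_of_mulVec_injective [Fintype m] [Fintype n] [DecidableEq n]
    {A : Matrix m n K} (hA : Function.Injective A.mulVec) :
    ∃ f : n → m, (A.submatrix f id).det ≠ 0 := by
  have hspan : Submodule.span K (Set.range A.row) = ⊤ := by
    apply Submodule.eq_top_of_finrank_eq
    rw [← rank_eq_finrank_span_row, rank, LinearMap.finrank_range_of_inj hA]
  obtain ⟨κ, a, ha, haspan, hali⟩ := exists_linearIndependent' K A.row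
  have : Fintype κ := Fintype.ofInjective a ha
  have hcard : Fintype.card n = Fintype.card κ := by
    rw [linearIndependent_iff_card_eq_finrank_span.1 hali, Set.finrank, haspan, hspan,
      finrank_top, Module.finrank_fintype_fun_eq_card]
  have e : n ≃ κ := Fintype.equivOfCardEq hcard
  refine ⟨a ∘ e, (isUnit_iff_isUnit_det _).1 (linearIndependent_rows_iff_isUnit.1 ?_) |>.ne_zero⟩
  exact hali.comp e e.injective

lemma IsTotallyUnimodular.exists_intCast_of_mulVec_injective [Fintype m] [Fintype n]
    {A : Matrix m n K} (hA : A.IsTotallyUnimodular) (hinj : Function.Injective A.mulVec)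
    {z : n → K} (hz : ∀ i, ∃ c : ℤ, (A *ᵥ z) i = c) (j : n) : ∃ c : ℤ, z j = c := by
  classical
  obtain ⟨f, hf⟩ := exists_submatrix_det_ne_zero_of_mulVec_injective hinj
  exact (hA.submatrix f id).exists_intCast_of_det_ne_zero hf (fun i => hz (f i)) j

def boxPolytope [Fintype n] (A : Matrix m n ℝ) (b : m → ℤ) (lo hi : n → ℤ) : Set (n → ℝ) :=
  {x | ∀ i, (A *ᵥ x) i = b i} ∩ Set.Icc (fun e => (lo e : ℝ)) (fun e => (hi e : ℝ))

lemma isCompact_boxPolytope [Fintype n] (A : Matrix m n ℝ) (b : m → ℤ) (lo hi : n → ℤ) :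
    IsCompact (boxPolytope A b lo hi) := by
  refine isCompact_Icc.inter_left ?_
  simp only [Set.ofPred_forall]
  exact isClosed_iInter fun i => isClosed_eq (by fun_prop) continuous_const

lemma mulVec_apply_eq_submatrix_add_sum [Fintype n] (A : Matrix m n ℝ) (p : n → Prop)
    [DecidablePred p] (x : n → ℝ) (i : m) :
    (A *ᵥ x) i = (A.submatrix id (Subtype.val : {e // p e} → n) *ᵥ (x ∘ Subtype.val)) i +
      ∑ e : {e // ¬p e}, A i e * x e :=
  (Fintype.sum_subtype_add_sum_subtype p (fun e => A i e * x e)).symm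

lemma eq_zero_of_mem_extremePoints_boxPolytope [Fintype n] {A : Matrix m n ℝ} {b : m → ℤ}
    {lo hi : n → ℤ} {z : n → ℝ} (hz : z ∈ (boxPolytope A b lo hi).extremePoints ℝ)
    {d : n → ℝ} (hAd : A *ᵥ d = 0) (hd : ∀ e, (∃ c : ℤ, z e = c) → d e = 0) : d = 0 := by
  obtain ⟨hzb, hlo, hhi⟩ := hz.1
  have hbox (e : n) :
      ∀ᶠ t in 𝓝 (0 : ℝ), (lo e : ℝ) ≤ z e + t * d e ∧ z e + t * d e ≤ hi e := by
    by_cases h : ∃ c : ℤ, z e = c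
    · simp [hd e h, hlo e, hhi e]
    · have hlt : (lo e : ℝ) < z e := (hlo e).lt_of_ne fun h' => h ⟨lo e, h'.symm⟩
      have hgt : z e < hi e := (hhi e).lt_of_ne fun h' => h ⟨hi e, h'⟩
      have hcont : Tendsto (fun t : ℝ => z e + t * d e) (𝓝 0) (𝓝 (z e)) :=
        Continuous.tendsto' (by fun_prop) 0 (z e) (by simp)
      exact (hcont.eventually (Ioo_mem_nhds hlt hgt)).mono fun t ht => ⟨ht.1.le, ht.2.le⟩
  refine eq_zero_of_mem_extremePoints_of_eventually_add_smul_mem hz ?_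
  filter_upwards [eventually_all.2 hbox] with t ht
  refine ⟨fun i => ?_, fun e => (ht e).1, fun e => (ht e).2⟩
  rw [mulVec_add, mulVec_smul, hAd, smul_zero, add_zero, hzb i]

lemma IsTotallyUnimodular.exists_intCast_of_mem_extremePoints [Fintype m] [Fintype n]
    {A : Matrix m n ℝ} (hA : A.IsTotallyUnimodular) {b : m → ℤ} {lo hi : n → ℤ} {z : n → ℝ}
    (hz : z ∈ (boxPolytope A b lo hi).extremePoints ℝ) (e : n) : ∃ c : ℤ, z e = c := by
  classical
  let p : n → Prop := fun e => ¬∃ c : ℤ, z e = c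
  by_contra he
  have hinj : Function.Injective (A.submatrix id (Subtype.val : {e // p e} → n)).mulVec := by
    intro u v huv
    let d : n → ℝ := fun e => if h : p e then (u - v) ⟨e, h⟩ else 0
    have hAd : A *ᵥ d = 0 := by
      ext i
      have hd : d ∘ Subtype.val = u - v := by ext e; simp [d, e.2]
      rw [mulVec_apply_eq_submatrix_add_sum A p, hd, mulVec_sub, huv, sub_self, Pi.zero_apply,
        zero_add]
      exact sum_eq_zero fun e _ => by simp [d, e.2]
    have hd0 := eq_zero_of_mem_extremePoints_boxPolytope hz hAd fun e he => by simp [d, p, he]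
    ext e
    simpa [d, e.2, sub_eq_zero] using congr_fun hd0 e
  have hint (i : m) :
      ∃ c : ℤ, (A.submatrix id (Subtype.val : {e // p e} → n) *ᵥ (z ∘ Subtype.val)) i = c := by
    choose a ha using hA.apply
    choose c hc using fun e : {e // ¬p e} => not_not.1 e.2
    refine ⟨b i - ∑ e : {e // ¬p e}, a i e * c e, ?_⟩
    rw [eq_sub_of_add_eq (mulVec_apply_eq_submatrix_add_sum A p z i).symm, hz.1.1 i]
    simp [ha, hc]
  exact he ((hA.submatrix id _).exists_intCast_of_mulVec_injective hinj hint ⟨e, he⟩)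

lemma IsTotallyUnimodular.exists_int_floor_le_le_ceil [Fintype m] [Fintype n]
    {A : Matrix m n ℝ} (hA : A.IsTotallyUnimodular) {b : m → ℤ} {y : n → ℝ}
    (hy : ∀ i, (A *ᵥ y) i = b i) :
    ∃ γ : n → ℤ, (∀ i, (A *ᵥ fun e => (γ e : ℝ)) i = b i) ∧ ∀ e, ⌊y e⌋ ≤ γ e ∧ γ e ≤ ⌈y e⌉ := by
  obtain ⟨z, hz⟩ := (isCompact_boxPolytope A b (fun e => ⌊y e⌋) (fun e => ⌈y e⌉)
    ).extremePoints_nonempty ⟨y, hy, fun e => Int.floor_le _, fun e => Int.le_ceil _⟩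
  choose γ hγ using hA.exists_intCast_of_mem_extremePoints hz
  obtain rfl : z = fun e => (γ e : ℝ) := funext hγ
  obtain ⟨hzb, hlo, hhi⟩ := hz.1
  exact ⟨γ, hzb, fun e => ⟨Int.cast_le.1 (hlo e), Int.cast_le.1 (hhi e)⟩⟩

end Matrix

lemma latMem.sub {V E : Type*} [Fintype E] {M : Matrix V E ℝ} {a b : E → ℝ} (ha : latMem M a)
    (hb : latMem M b) : latMem M (a - b) := by
  refine ⟨by rw [mulVec_sub, ha.1, hb.1, sub_self], fun e => ?_⟩
  obtain ⟨p, hp⟩ := ha.2 e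
  obtain ⟨q, hq⟩ := hb.2 e
  exact ⟨p - q, by simp [hp, hq]⟩

lemma sum_mul_sub_nonpos_of_sq_dist_le {E : Type*} [Fintype E] {x lam γ : E → ℝ}
    (h0 : ∑ e, x e ^ 2 ≤ ∑ e, (x e - γ e) ^ 2)
    (hlam : ∑ e, (x e - lam e) ^ 2 ≤ ∑ e, (x e - (lam - γ) e) ^ 2) :
    ∑ e, γ e * (lam e - γ e) ≤ 0 := by
  have key : ∑ e, γ e * (lam e - γ e) = ((∑ e, x e ^ 2 - ∑ e, (x e - γ e) ^ 2) +
      (∑ e, (x e - lam e) ^ 2 - ∑ e, (x e - (lam - γ) e) ^ 2)) / 2 := by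
    simp only [← sum_sub_distrib, ← sum_add_distrib, sum_div, Pi.sub_apply]
    exact sum_congr rfl fun e _ => by ring
  rw [key]
  linarith

lemma mul_sub_nonneg_of_floor_le_of_le_ceil {l g : ℤ} {k : ℝ} (hlk : |(l : ℝ)| ≤ k)
    (h1 : ⌊l / k⌋ ≤ g) (h2 : g ≤ ⌈l / k⌉) : 0 ≤ g * (l - g) := by
  have hk : 0 ≤ k := (abs_nonneg _).trans hlk
  have hy : |(l / k : ℝ)| ≤ 1 := by
    rw [abs_div, abs_of_nonneg hk]
    exact div_le_one_of_le₀ hlk hk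
  have hg_le : g ≤ 1 := h2.trans (Int.ceil_le.2 (by exact_mod_cast (abs_le.1 hy).2))
  have hle_g : -1 ≤ g := (Int.le_floor.2 (by exact_mod_cast (abs_le.1 hy).1)).trans h1
  have hpos : 0 < g → 0 < l := fun hg => by
    rcases div_pos_iff.1 (Int.ceil_pos.1 (hg.trans_le h2)) with h | h
    · exact_mod_cast h.1
    · linarith [h.2]
  have hneg : g < 0 → l < 0 := fun hg => by
    rcases div_neg_iff.1 (Int.floor_lt_zero.1 (h1.trans_lt hg)) with h | h
    · linarith [h.2]
    · exact_mod_cast h.1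
  rcases (show g = -1 ∨ g = 0 ∨ g = 1 by omega) with rfl | rfl | rfl
  · have := hneg (by norm_num); omega
  · simp
  · have := hpos (by norm_num); omega

lemma mul_sub_pos_of_floor_le_of_le_ceil {l g : ℤ} (hl : 2 ≤ |l|)
    (h1 : ⌊l / |(l : ℝ)|⌋ ≤ g) (h2 : g ≤ ⌈l / |(l : ℝ)|⌉) : 0 < g * (l - g) := by
  have hl0 : (l : ℝ) ≠ 0 := by exact_mod_cast abs_pos.1 (by omega)
  rcases abs_cases l with ⟨habs, hsign⟩ | ⟨habs, hsign⟩
  · have : (l / |(l : ℝ)|) = ((1 : ℤ) : ℝ) := by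
      rw [← Int.cast_abs, habs, div_self hl0, Int.cast_one]
    rw [this, Int.floor_intCast] at h1
    rw [this, Int.ceil_intCast] at h2
    nlinarith
  · have : (l / |(l : ℝ)|) = ((-1 : ℤ) : ℝ) := by
      rw [← Int.cast_abs, habs, Int.cast_neg, div_neg, div_self hl0, Int.cast_neg, Int.cast_one]
    rw [this, Int.floor_intCast] at h1
    rw [this, Int.ceil_intCast] at h2
    nlinarith

theorem stmt_6_general {V E : Type*} [Fintype V] [Fintype E]
    (M : Matrix V E ℝ)
    (hTU : ∀ (k : ℕ) (f : Fin k → V) (g : Fin k → E),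
      (M.submatrix f g).det = 1 ∨ (M.submatrix f g).det = 0 ∨ (M.submatrix f g).det = -1)
    (lam : E → ℝ) (hlam : latMem M lam)
    (x : E → ℝ)
    (hxVlam : ∀ μ : E → ℝ, latMem M μ →
      ∑ e, (x e - lam e) ^ 2 ≤ ∑ e, (x e - μ e) ^ 2)
    (hxV0 : ∀ μ : E → ℝ, latMem M μ →
      ∑ e, (x e) ^ 2 ≤ ∑ e, (x e - μ e) ^ 2) :
    ∀ e, lam e = -1 ∨ lam e = 0 ∨ lam e = 1 := by
  have hM : M.IsTotallyUnimodular := (isTotallyUnimodular_iff M).2 fun k f g => by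
    rcases hTU k f g with h | h | h <;> rw [h]
    exacts [⟨1, SignType.coe_one⟩, ⟨0, SignType.coe_zero⟩, ⟨-1, SignType.coe_neg_one⟩]
  choose l hl using hlam.2
  by_contra! hbad
  obtain ⟨e₀, he₀⟩ := hbad
  obtain ⟨e, -, hmax⟩ := exists_max_image univ (fun f => |l f|) ⟨e₀, mem_univ _⟩
  have he : 2 ≤ |l e| := by
    refine le_trans ?_ (hmax e₀ (mem_univ _))
    simp only [hl e₀] at he₀
    have : l e₀ ≠ -1 ∧ l e₀ ≠ 0 ∧ l e₀ ≠ 1 := by exact_mod_cast he₀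
    rcases abs_cases (l e₀) with h | h <;> omega
  have hy : M *ᵥ (fun f => l f / |(l e : ℝ)|) = 0 := by
    have : (fun f => l f / |(l e : ℝ)|) = |(l e : ℝ)|⁻¹ • lam := by
      ext f; simp [hl, div_eq_inv_mul]
    rw [this, mulVec_smul, hlam.1, smul_zero]
  obtain ⟨γ, hγ, hγy⟩ := hM.exists_int_floor_le_le_ceil (b := 0)
    fun i => (congr_fun hy i).trans Int.cast_zero.symm
  have hγΛ : latMem M fun f => (γ f : ℝ) :=
    ⟨funext fun i => by simpa using hγ i, fun f => ⟨γ f, rfl⟩⟩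
  have hpos : 0 < ∑ f, (γ f : ℝ) * (lam f - γ f) := by
    simp only [hl]
    exact_mod_cast sum_pos'
      (fun f _ => mul_sub_nonneg_of_floor_le_of_le_ceil (by exact_mod_cast hmax f (mem_univ f))
        (hγy f).1 (hγy f).2)
      ⟨e, mem_univ e, mul_sub_pos_of_floor_le_of_le_ceil he (hγy e).1 (hγy e).2⟩
  exact (sum_mul_sub_nonpos_of_sq_dist_le (hxV0 _ hγΛ) (hxVlam _ (hlam.sub hγΛ))).not_gt hpos

/-- Let M be totally unimodular, Λ = ker(M) ∩ ℤ^E and λ ∈ Λ. If the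
Voronoi cells V_λ and V_0 (inside ker(M) with the Euclidean inner product) have a
common point, then λ is Eulerian: all of its coordinates lie in {-1, 0, 1}. -/
theorem stmt_6 {V E : Type*} [Fintype V] [Fintype E]
    (M : Matrix V E ℝ)
    (hTU : ∀ (k : ℕ) (f : Fin k → V) (g : Fin k → E),
      (M.submatrix f g).det = 1 ∨ (M.submatrix f g).det = 0 ∨ (M.submatrix f g).det = -1)
    (lam : E → ℝ) (hlam : latMem M lam)
    (x : E → ℝ) (hxker : M.mulVec x = 0)
    (hxVlam : ∀ μ : E → ℝ, latMem M μ →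
      ∑ e, (x e - lam e) ^ 2 ≤ ∑ e, (x e - μ e) ^ 2)
    (hxV0 : ∀ μ : E → ℝ, latMem M μ →
      ∑ e, (x e) ^ 2 ≤ ∑ e, (x e - μ e) ^ 2) :
    ∀ e, lam e = -1 ∨ lam e = 0 ∨ lam e = 1 :=
  stmt_6_general M hTU lam hlam x hxVlam hxV0
end

section
/- Let M be a totally unimodular matrix with columns indexed by E and let λ ∈ ker(M) be nonzero. Let M_λ be the submatrix of M consisting of the columns indexed by supp(λ). Then ker(M_λ) has a basis consisting of circuits each consistent with λ (i.e., Eulerian kernel vectors γ supported on circuits with λ_e·γ_e ≥ 0 for all e). -/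
/-!
Call `x` conformal to `y` if `x` vanishes off the support of `y` and agrees with `y` in sign on
its own support. For a totally unimodular `M`, Cramer's rule shows that a kernel vector of
minimal support has entries of constant absolute value, hence is a multiple of a circuit. Among
the nonzero kernel vectors conformal to a given `x ∈ ker M`, one of minimal support is therefore
a multiple of a conformal circuit `γ`, and subtracting from `x` the largest multiple of `γ` that
keeps it conformal to `x` shrinks the support: by induction every kernel vector conformal to `λ`
is a combination of circuits conformal to `λ`. A kernel vector `y` supported in `supp λ` is the
difference of `c • λ + y` and `c • λ`, both conformal to `λ` once `c` is large, so these circuits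
span `ker M_λ`.
-/

/-- A circuit of M: a nonzero Eulerian kernel vector whose support is a minimal
linearly dependent set of columns of M. -/
def IsCircuit {V E : Type*} [Fintype E] (M : Matrix V E ℝ) (γ : E → ℝ) : Prop :=
  M.mulVec γ = 0 ∧ (∀ e, γ e = -1 ∨ γ e = 0 ∨ γ e = 1) ∧ γ ≠ 0 ∧
    ¬ LinearIndependent ℝ (fun e : {e : E // γ e ≠ 0} => fun v => M v e.1) ∧
    ∀ s : Set E, s ⊂ {e : E | γ e ≠ 0} →
      LinearIndependent ℝ (fun e : s => fun v => M v e.1)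

open Matrix Function

/-- `Conforms γ λ` is the paper's "`γ` is consistent with `λ`". -/
def Conforms {E : Type*} (x y : E → ℝ) : Prop := ∀ e, x e ≠ 0 → 0 < x e * y e

namespace Conforms

variable {E : Type*} {x y z : E → ℝ}

lemma refl (x : E → ℝ) : Conforms x x := fun _ h => mul_self_pos.2 h

lemma apply_eq_zero (h : Conforms x y) {e : E} (he : y e = 0) : x e = 0 := by
  by_contra hx
  simpa [he] using h e hx

lemma support_subset (h : Conforms x y) : support x ⊆ support y :=
  fun _ hx hy => hx (h.apply_eq_zero hy)

lemma mul_nonneg (h : Conforms x y) (e : E) : 0 ≤ y e * x e := by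
  by_cases hx : x e = 0
  · simp [hx]
  · exact (mul_comm (x e) (y e) ▸ h e hx).le

lemma trans (hxy : Conforms x y) (hyz : Conforms y z) : Conforms x z := fun e he => by
  have hy : y e ≠ 0 := hxy.support_subset he
  have h : 0 < x e * z e * (y e * y e) := by
    linear_combination mul_pos (hxy e he) (hyz e hy)
  exact (pos_iff_pos_of_mul_pos h).2 (mul_self_pos.2 hy)

lemma smul_left {c : ℝ} (hc : 0 < c) (h : Conforms x y) : Conforms (c • x) y := fun e he => by
  rw [Pi.smul_apply, smul_eq_mul, mul_assoc]
  exact mul_pos hc (h e (right_ne_zero_of_mul he))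

end Conforms

/-- Take `t` maximal such that `y - t • z` still conforms to `y`. -/
lemma exists_sub_smul_conforms {E : Type*} [Fintype E] {y z : E → ℝ}
    (hzy : support z ⊆ support y) (hz : z ≠ 0) :
    ∃ t : ℝ, Conforms (y - t • z) y ∧ support (y - t • z) ⊂ support y := by
  classical
  wlog hpos : ∃ e, 0 < y e * z e generalizing z
  · obtain ⟨e, he⟩ := Function.ne_iff.1 hz
    have hneg : y e * z e < 0 :=
      (not_lt.1 fun h => hpos ⟨e, h⟩).lt_of_ne (mul_ne_zero (hzy he) he)
    obtain ⟨t, ht⟩ :=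
      this (z := -z) (by simpa using hzy) (neg_ne_zero.2 hz) ⟨e, by simpa using hneg⟩
    exact ⟨-t, by simpa using ht⟩
  obtain ⟨e₀, he₀⟩ := hpos
  obtain ⟨m, hmP, hm⟩ := (Finset.univ.filter fun e => 0 < y e * z e).exists_min_image
    (fun e => y e / z e) ⟨e₀, by simpa using he₀⟩
  simp only [Finset.mem_filter, Finset.mem_univ, true_and] at hmP hm
  have hzm : z m ≠ 0 := right_ne_zero_of_mul hmP.ne'
  have ht : 0 < y m / z m := div_pos_iff.2 (mul_pos_iff.1 hmP)
  set w := y - (y m / z m) • z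
  have hwy : ∀ e, w e ≠ 0 → y e ≠ 0 := fun e hw hy => hw (by
    simp [w, hy, show z e = 0 from notMem_support.1 fun h => hzy h hy])
  refine ⟨y m / z m, fun e hwe => ?_, fun e he => hwy e he, fun hsub => ?_⟩
  · refine lt_of_le_of_ne ?_ (mul_ne_zero hwe (hwy e hwe)).symm
    have hw : w e * y e = y e * y e - y m / z m * (y e * z e) := by simp [w]; ring
    rcases le_or_gt (y e * z e) 0 with hyz | hyz
    · nlinarith [mul_self_nonneg (y e)]
    · have hze : z e ≠ 0 := right_ne_zero_of_mul hyz.ne'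
      have := mul_le_mul_of_nonneg_right (hm e hyz) hyz.le
      have hsq : y e / z e * (y e * z e) = y e * y e := by field_simp
      linarith
  · have : w m ≠ 0 := hsub (left_ne_zero_of_mul hmP.ne')
    exact this (by simp [w, div_mul_cancel₀ _ hzm])

lemma LinearIndependent.exists_isUnit_det_submatrix {K V ι : Type*} [Field K] [Fintype V]
    [Fintype ι] [DecidableEq ι] {N : Matrix V ι K} (h : LinearIndependent K N.col) :
    ∃ r : ι → V, IsUnit (N.submatrix r id).det := by
  have hrows : Submodule.span K (Set.range N.row) = ⊤ := by
    refine Submodule.eq_top_of_finrank_eq ?_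
    rw [← rank_eq_finrank_span_row, ← rank_transpose, Module.finrank_fintype_fun_eq_card]
    exact LinearIndependent.rank_matrix (M := Nᵀ) h
  obtain ⟨κ, a, -, hspan, hli⟩ := exists_linearIndependent' K N.row
  let b : Module.Basis κ K (ι → K) := .mk hli (by rw [hspan, hrows])
  let e : ι ≃ κ := (Pi.basisFun K ι).indexEquiv b
  refine ⟨a ∘ e, (isUnit_iff_isUnit_det _).1 (linearIndependent_rows_iff_isUnit.1 ?_)⟩
  exact hli.comp e e.injective

/-- By Cramer's rule, `u j` is a quotient of two minors of `M`. -/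
lemma Matrix.IsTotallyUnimodular.mem_range_of_submatrix_mulVec_eq_col {K V E ι : Type*} [Field K]
    [Fintype ι] [DecidableEq ι] {M : Matrix V E K} (hM : M.IsTotallyUnimodular) {r : ι → V}
    {b : ι → E} (hA : IsUnit (M.submatrix r b).det) {u : ι → K} {e : E}
    (hu : M.submatrix r b *ᵥ u = fun i => M (r i) e) (j : ι) :
    u j ∈ Set.range SignType.cast := by
  have hcramer : (M.submatrix r b).det • u = cramer (M.submatrix r b) (fun i => M (r i) e) := by
    apply mulVec_injective_iff_isUnit.2 ((isUnit_iff_isUnit_det _).2 hA)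
    rw [mulVec_smul, hu, mulVec_cramer]
  have hcol : (M.submatrix r b).updateCol j (fun i => M (r i) e) =
      M.submatrix r (update b j e) := by
    ext i k
    by_cases hk : k = j <;> simp [hk]
  have hdet := congrFun hcramer j
  rw [Pi.smul_apply, cramer_apply, hcol, smul_eq_mul] at hdet
  rw [isTotallyUnimodular_iff_fintype] at hM
  obtain ⟨s, hs⟩ := hM ι r b
  obtain ⟨s', hs'⟩ := hM ι r (update b j e)
  refine ⟨s * s', ?_⟩
  rw [SignType.coe_mul, hs', ← hdet, ← hs, ← mul_assoc]
  rcases s with _ | _ | _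
  · exact absurd hs.symm (by simpa using hA.ne_zero)
  all_goals simp

section Circuits

variable {V E : Type*} [Fintype E] (M : Matrix V E ℝ)

lemma linearIndepOn_col_iff (s : Set E) :
    LinearIndepOn ℝ M.col s ↔ ∀ z : E → ℝ, M *ᵥ z = 0 → support z ⊆ s → z = 0 := by
  have hlc : ∀ l : E →₀ ℝ, Finsupp.linearCombination ℝ M.col l = M *ᵥ l := fun l => by
    ext v
    simp [Finsupp.linearCombination_apply, Finsupp.sum_fintype, mulVec, dotProduct, mul_comm]
  rw [linearIndepOn_iff]
  refine ⟨fun h z hz hzs => ?_, fun h l hl hl0 => ?_⟩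
  · have := h (Finsupp.equivFunOnFinite.symm z) (by simpa [Finsupp.mem_supported] using hzs)
      (by simpa [hlc] using hz)
    funext e
    simpa using DFunLike.congr_fun this e
  · rw [hlc] at hl0
    exact DFunLike.coe_injective (h l hl0 (by simpa [Finsupp.mem_supported] using hl))

lemma mulVec_submatrix_subtype {ι : Type*} {s : Set E} [Fintype s] (r : ι → V)
    {x : E → ℝ} (hx : support x ⊆ s) :
    M.submatrix r ((↑) : s → E) *ᵥ (fun g => x g) = fun i => (M *ᵥ x) (r i) := by
  classical
  ext i
  simp only [mulVec, dotProduct, submatrix_apply]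
  rw [Finset.sum_set_coe (f := fun g => M (r i) g * x g)]
  exact Fintype.sum_subset fun g hg => by simpa using hx (right_ne_zero_of_mul hg)

variable {M} [Fintype V]

lemma Matrix.IsTotallyUnimodular.mem_range_of_mulVec_eq_col (hM : M.IsTotallyUnimodular)
    {s : Set E} (hs : LinearIndepOn ℝ M.col s) {x : E → ℝ} (hxs : support x ⊆ s) {e : E}
    (hx : M *ᵥ x = M.col e) (f : E) : x f ∈ Set.range SignType.cast := by
  classical
  by_cases hf : f ∈ s
  · obtain ⟨r, hr⟩ := hs.exists_isUnit_det_submatrix (N := M.submatrix id ((↑) : s → E))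
    refine hM.mem_range_of_submatrix_mulVec_eq_col hr (u := fun g : s => x g) (e := e) ?_ ⟨f, hf⟩
    simpa [hx] using mulVec_submatrix_subtype M r hxs
  · exact ⟨0, by simpa using (notMem_support.1 fun h => hf (hxs h)).symm⟩

/-- Removing one coordinate `e` from a support-minimal kernel vector `y` leaves independent
columns, so `Pi.single e 1 - (y e)⁻¹ • y` is the solution of a system as above. -/
lemma Matrix.IsTotallyUnimodular.abs_eq_of_minimal (hM : M.IsTotallyUnimodular) {y : E → ℝ}
    (hy : M *ᵥ y = 0) (hmin : ∀ s ⊂ support y, LinearIndepOn ℝ M.col s) {e f : E}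
    (he : y e ≠ 0) (hf : y f ≠ 0) : |y f| = |y e| := by
  classical
  obtain rfl | hfe := eq_or_ne f e
  · rfl
  set x := Pi.single e 1 - (y e)⁻¹ • y
  have hxs : support x ⊆ support y \ {e} := fun g hg => by
    by_cases hge : g = e
    · simp [x, hge, he] at hg
    · exact ⟨fun hy => hg (by simp [x, hge, hy]), hge⟩
  have hx : M *ᵥ x = M.col e := by simp [x, mulVec_sub, mulVec_smul, hy]
  obtain ⟨s, hs⟩ :=
    hM.mem_range_of_mulVec_eq_col (hmin _ (Set.sdiff_singleton_ssubset.2 he)) hxs hx f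
  have hxf : x f = -((y e)⁻¹ * y f) := by simp [x, hfe]
  have habs : |(y e)⁻¹ * y f| = 1 := by
    rw [← abs_neg, ← hxf, ← hs]
    rcases s with _ | _ | _
    · simp [hxf, he, hf] at hs
    all_goals simp
  rwa [abs_mul, abs_inv, inv_mul_eq_one₀ (abs_ne_zero.2 he), eq_comm] at habs

lemma Matrix.IsTotallyUnimodular.isCircuit_smul_of_minimal (hM : M.IsTotallyUnimodular)
    {y : E → ℝ} (hy : M *ᵥ y = 0) (hmin : ∀ s ⊂ support y, LinearIndepOn ℝ M.col s) {e : E}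
    (he : y e ≠ 0) : IsCircuit M (|y e|⁻¹ • y) := by
  have hc : |y e|⁻¹ ≠ 0 := inv_ne_zero (abs_ne_zero.2 he)
  have hsupp : support (|y e|⁻¹ • y) = support y := support_const_smul_of_ne_zero _ _ hc
  have hy0 : y ≠ 0 := fun h => he (congrFun h e)
  refine ⟨by rw [mulVec_smul, hy, smul_zero], fun g => ?_, smul_ne_zero hc hy0, ?_, ?_⟩
  · by_cases hg : y g = 0
    · simp [hg]
    · have : |(|y e|⁻¹ • y) g| = 1 := by
        rw [Pi.smul_apply, smul_eq_mul, abs_mul, abs_inv, abs_abs,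
          hM.abs_eq_of_minimal hy hmin he hg, inv_mul_cancel₀ (abs_ne_zero.2 he)]
      rcases abs_eq zero_le_one |>.1 this with h | h <;> simp [h]
  · change ¬ LinearIndepOn ℝ M.col (support (|y e|⁻¹ • y))
    rw [linearIndepOn_col_iff]
    exact fun h => smul_ne_zero hc hy0 (h _ (by rw [mulVec_smul, hy, smul_zero]) subset_rfl)
  · intro s hs
    exact hmin s (hsupp ▸ hs)

/-- A conforming kernel vector of minimal support is a multiple of a circuit: a dependence on a
proper subset of its support could be eliminated by `exists_sub_smul_conforms`. -/
lemma Matrix.IsTotallyUnimodular.exists_isCircuit_conforms (hM : M.IsTotallyUnimodular)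
    {x : E → ℝ} (hx : M *ᵥ x = 0) (hx0 : x ≠ 0) : ∃ γ, IsCircuit M γ ∧ Conforms γ x := by
  obtain ⟨y, ⟨hy, hy0, hyx⟩, hmin⟩ := (measure fun y : E → ℝ => (support y).ncard).wf.has_min
    {y | M *ᵥ y = 0 ∧ y ≠ 0 ∧ Conforms y x} ⟨x, hx, hx0, .refl x⟩
  obtain ⟨e, he⟩ := Function.ne_iff.1 hy0
  refine ⟨_, hM.isCircuit_smul_of_minimal hy (fun s hs => ?_) he,
    (Conforms.refl y).smul_left (inv_pos.2 (abs_pos.2 he)) |>.trans hyx⟩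
  by_contra hdep
  obtain ⟨z, hz, hzs, hz0⟩ : ∃ z, M *ᵥ z = 0 ∧ support z ⊆ s ∧ z ≠ 0 := by
    simpa [linearIndepOn_col_iff, and_assoc] using hdep
  obtain ⟨t, hwy, hlt⟩ := exists_sub_smul_conforms (hzs.trans hs.subset) hz0
  refine hmin (y - t • z) ⟨by rw [mulVec_sub, mulVec_smul, hy, hz, smul_zero, sub_zero], ?_,
    hwy.trans hyx⟩ (Set.ncard_lt_ncard hlt)
  obtain ⟨g, hgy, hgs⟩ := Set.exists_of_ssubset hs
  exact fun h => hgy (by simpa [notMem_support.1 fun hg => hgs (hzs hg)] using congrFun h g)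

/-- Tutte's conformal decomposition. -/
lemma Matrix.IsTotallyUnimodular.mem_span_isCircuit_conforms (hM : M.IsTotallyUnimodular)
    {lam x : E → ℝ} (hx : M *ᵥ x = 0) (hxl : Conforms x lam) :
    x ∈ Submodule.span ℝ {γ | IsCircuit M γ ∧ Conforms γ lam} := by
  induction hn : (support x).ncard using Nat.strong_induction_on generalizing x with
  | _ n ih =>
    obtain rfl | hx0 := eq_or_ne x 0
    · exact zero_mem _
    obtain ⟨γ, hγ, hγx⟩ := hM.exists_isCircuit_conforms hx hx0
    obtain ⟨t, hw, hlt⟩ := exists_sub_smul_conforms hγx.support_subset hγ.2.2.1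
    have hmem := ih _ (hn ▸ Set.ncard_lt_ncard hlt)
      (by rw [mulVec_sub, mulVec_smul, hx, hγ.1, smul_zero, sub_zero]) (hw.trans hxl) rfl
    simpa using add_mem hmem (Submodule.smul_mem _ t (Submodule.subset_span ⟨hγ, hγx.trans hxl⟩))

end Circuits

lemma exists_smul_add_conforms {E : Type*} [Fintype E] {lam y : E → ℝ}
    (hy : support y ⊆ support lam) : ∃ c : ℝ, Conforms (c • lam + y) lam := by
  refine ⟨1 + ∑ e, |y e / lam e|, fun e he => ?_⟩
  have hl : lam e ≠ 0 := fun hl => he (by simp [hl, notMem_support.1 fun h => hy h hl])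
  have hc : |y e / lam e| ≤ ∑ e, |y e / lam e| :=
    Finset.single_le_sum (f := fun e => |y e / lam e|) (fun _ _ => abs_nonneg _)
      (Finset.mem_univ e)
  have key : |y e / lam e| * (lam e * lam e) = |y e * lam e| := by
    rw [abs_div, abs_mul, div_mul_eq_mul_div, ← abs_mul_abs_self (lam e)]
    field_simp
  simp only [Pi.add_apply, Pi.smul_apply, smul_eq_mul]
  nlinarith [mul_le_mul_of_nonneg_right hc (mul_self_nonneg (lam e)), neg_abs_le (y e * lam e),
    mul_self_pos.2 hl]

theorem stmt_11_general {V E : Type*} [Fintype V] [Fintype E]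
    (M : Matrix V E ℝ)
    (hTU : ∀ (k : ℕ) (f : Fin k → V) (g : Fin k → E),
      (M.submatrix f g).det = 1 ∨ (M.submatrix f g).det = 0 ∨ (M.submatrix f g).det = -1)
    (lam : E → ℝ) (hlam : M.mulVec lam = 0) :
    ∃ (n : ℕ) (γ : Fin n → (E → ℝ)),
      (∀ i, IsCircuit M (γ i) ∧ (∀ e, 0 ≤ lam e * γ i e) ∧
        ∀ e, lam e = 0 → γ i e = 0) ∧
      LinearIndependent ℝ γ ∧
      ∀ y : E → ℝ, M.mulVec y = 0 → (∀ e, lam e = 0 → y e = 0) →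
        y ∈ Submodule.span ℝ (Set.range γ) := by
  have hM : M.IsTotallyUnimodular := (isTotallyUnimodular_iff M).2 fun k f g => by
    rcases hTU k f g with h | h | h
    exacts [⟨1, by simp [h]⟩, ⟨0, by simp [h]⟩, ⟨-1, by simp [h]⟩]
  obtain ⟨γ, hγ, hspan, hli⟩ :=
    Submodule.exists_fun_fin_finrank_span_eq ℝ {γ | IsCircuit M γ ∧ Conforms γ lam}
  refine ⟨_, γ, fun i => ⟨(hγ i).1, (hγ i).2.mul_nonneg, fun _ => (hγ i).2.apply_eq_zero⟩, hli,
    fun y hy hyl => ?_⟩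
  obtain ⟨c, hc⟩ := exists_smul_add_conforms (lam := lam) fun e he hl => he (hyl e hl)
  have hcy := hM.mem_span_isCircuit_conforms
    (by rw [mulVec_add, mulVec_smul, hlam, hy, smul_zero, zero_add]) hc
  have hlam' := hM.mem_span_isCircuit_conforms hlam (.refl lam)
  rw [hspan]
  simpa using sub_mem hcy (Submodule.smul_mem _ c hlam')

/-- For M totally unimodular and a nonzero λ ∈ ker(M), the kernel of
the submatrix M_λ on the columns supp(λ) — identified with the subspace of kernel
vectors supported on supp(λ) — has a basis consisting of circuits, each consistent
with λ. -/
theorem stmt_11 {V E : Type*} [Fintype V] [Fintype E]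
    (M : Matrix V E ℝ)
    (hTU : ∀ (k : ℕ) (f : Fin k → V) (g : Fin k → E),
      (M.submatrix f g).det = 1 ∨ (M.submatrix f g).det = 0 ∨ (M.submatrix f g).det = -1)
    (lam : E → ℝ) (hlam : M.mulVec lam = 0) (hne : lam ≠ 0) :
    ∃ (n : ℕ) (γ : Fin n → (E → ℝ)),
      (∀ i, IsCircuit M (γ i) ∧ (∀ e, 0 ≤ lam e * γ i e) ∧
        ∀ e, lam e = 0 → γ i e = 0) ∧
      LinearIndependent ℝ γ ∧
      ∀ y : E → ℝ, M.mulVec y = 0 → (∀ e, lam e = 0 → y e = 0) →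
        y ∈ Submodule.span ℝ (Set.range γ) :=
  stmt_11_general M hTU lam hlam
end

section
/- Let G be a finite directed graph and let H' ⊊ H be subgraphs (edge subsets) of G, each equipped with a strongly connected orientation such that the orientation of H' is induced from that of H. Then genus(H') < genus(H), where genus denotes the dimension of the kernel of the signed incidence matrix restricted to the given edge set. -/
/-- The genus of an edge subset: the dimension of the kernel of the signed
incidence matrix restricted to the columns in that subset. -/
noncomputable def genus {V E : Type*} [Fintype V] [Fintype E] [DecidableEq V]
    [DecidableEq E] (src tgt : E → V) (H : Finset E) : ℕ :=
  Module.finrank ℝ (LinearMap.ker (Matrix.mulVecLin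
    ((signedInc src tgt).submatrix id (fun e : {e : E // e ∈ H} => e.1))))

/-!
An edge `e ∈ H \ H'` lies on a directed cycle in `H`; the indicator of that cycle is a flow,
i.e. a kernel vector of the incidence matrix of `H`, which is nonzero at `e`. Extending kernel
vectors of `H'` by zero embeds the kernel of `H'` into that of `H`, and the cycle flow lies
outside the image, so the inclusion of kernels is strict.
-/

open Module Function Matrix

namespace Matrix

variable {R m ι κ : Type*} [Fintype ι] [Fintype κ]

theorem mulVec_extend_zero [NonUnitalNonAssocSemiring R] (B : Matrix m κ R) {f : ι → κ}
    (hf : Injective f) (x : ι → R) :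
    B *ᵥ extend f x 0 = B.submatrix id f *ᵥ x := by
  funext v
  refine (Fintype.sum_of_injective f hf _ _ (fun k hk => ?_) (fun i => ?_)).symm
  · simp [extend_apply' _ _ _ (fun ⟨i, hi⟩ => hk ⟨i, hi⟩)]
  · simp [hf.extend_apply]

theorem finrank_ker_submatrix_lt [Field R] (B : Matrix m κ R) {f : ι → κ} (hf : Injective f)
    {x : κ → R} (hx : B *ᵥ x = 0) {k : κ} (hk : k ∉ Set.range f) (hxk : x k ≠ 0) :
    finrank R (LinearMap.ker (B.submatrix id f).mulVecLin) <
      finrank R (LinearMap.ker B.mulVecLin) := by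
  set L := ExtendByZero.linearMap R f
  have hL : Injective L := extend_injective hf (0 : κ → R)
  have hle : (LinearMap.ker (B.submatrix id f).mulVecLin).map L ≤ LinearMap.ker B.mulVecLin := by
    rintro _ ⟨y, hy, rfl⟩
    change B *ᵥ extend f y 0 = 0
    simpa [mulVec_extend_zero B hf] using hy
  have hx_notMem : x ∉ (LinearMap.ker (B.submatrix id f).mulVecLin).map L := by
    rintro ⟨y, -, rfl⟩
    exact hxk (by simp [L, extend_apply' _ _ _ (fun ⟨i, hi⟩ => hk ⟨i, hi⟩)])
  rw [(Submodule.equivMapOfInjective L hL _).finrank_eq]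
  exact Submodule.finrank_lt_finrank_of_lt
    (lt_of_le_of_ne hle fun h => hx_notMem (h ▸ LinearMap.mem_ker.2 hx))

end Matrix

section SignedIncidence

variable {V E : Type*} [Fintype E] [DecidableEq V] [DecidableEq E] (src tgt : E → V)

theorem signedInc_mulVec_single (e : E) :
    signedInc src tgt *ᵥ Pi.single e 1 = Pi.single (tgt e) 1 - Pi.single (src e) 1 := by
  funext v
  simp [mulVec_single, signedInc, Pi.single_apply, eq_comm]

theorem exists_nonneg_signedInc_mulVec_of_reflTransGen {a b : V}
    (hab : Relation.ReflTransGen (fun x y => ∃ f, src f = x ∧ tgt f = y) a b) :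
    ∃ y : E → ℝ, 0 ≤ y ∧ signedInc src tgt *ᵥ y = Pi.single b 1 - Pi.single a 1 := by
  induction hab with
  | refl => exact ⟨0, le_rfl, by simp⟩
  | tail _ hstep ih =>
    obtain ⟨y, hy, hMy⟩ := ih
    obtain ⟨f, rfl, rfl⟩ := hstep
    refine ⟨y + Pi.single f 1, add_nonneg hy (Pi.single_nonneg.2 zero_le_one), ?_⟩
    rw [mulVec_add, hMy, signedInc_mulVec_single]
    abel

theorem exists_signedInc_mulVec_eq_zero_and_pos {e : E}
    (he : Relation.ReflTransGen (fun x y => ∃ f, src f = x ∧ tgt f = y) (tgt e) (src e)) :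
    ∃ x : E → ℝ, signedInc src tgt *ᵥ x = 0 ∧ 0 < x e := by
  obtain ⟨y, hy, hMy⟩ := exists_nonneg_signedInc_mulVec_of_reflTransGen src tgt he
  refine ⟨y + Pi.single e 1, ?_, ?_⟩
  · rw [mulVec_add, hMy, signedInc_mulVec_single]
    abel
  · simpa using add_pos_of_nonneg_of_pos (hy e) zero_lt_one

end SignedIncidence

theorem stmt_12_general {V E : Type*} [Fintype V] [Fintype E] [DecidableEq V] [DecidableEq E]
    (src tgt : E → V) (H' H : Finset E) (hss : H' ⊂ H)
    (hH : ∀ e ∈ H, Relation.ReflTransGen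
      (fun x y : V => ∃ f ∈ H, src f = x ∧ tgt f = y) (tgt e) (src e)) :
    genus src tgt H' < genus src tgt H := by
  obtain ⟨e, heH, heH'⟩ := Finset.exists_of_ssubset hss
  have hcycle : Relation.ReflTransGen
      (fun x y => ∃ f : {f // f ∈ H}, src f = x ∧ tgt f = y) (tgt e) (src e) :=
    Relation.ReflTransGen.mono (fun _ _ ⟨f, hf, hxy⟩ => ⟨⟨f, hf⟩, hxy⟩) _ _ (hH e heH)
  obtain ⟨x, hx, hxe⟩ :=
    exists_signedInc_mulVec_eq_zero_and_pos (src ∘ Subtype.val) (tgt ∘ Subtype.val) (e := ⟨e, heH⟩)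
      hcycle
  exact Matrix.finrank_ker_submatrix_lt ((signedInc src tgt).submatrix id Subtype.val)
    (Set.inclusion_injective (Finset.coe_subset.2 hss.subset)) hx
    (fun ⟨⟨f, hf⟩, hfe⟩ => heH' ((show f = e from congrArg Subtype.val hfe) ▸ hf)) hxe.ne'

/-- If H' ⊊ H are edge subsets of a finite directed graph, each
strongly connected (every edge of the subset lies on a directed cycle within the
subset, the orientation of H' being the one induced from H), then
genus(H') < genus(H). -/
theorem stmt_12 {V E : Type*} [Fintype V] [Fintype E] [DecidableEq V] [DecidableEq E]
    (src tgt : E → V) (H' H : Finset E) (hss : H' ⊂ H)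
    (hH : ∀ e ∈ H, Relation.ReflTransGen
      (fun x y : V => ∃ f ∈ H, src f = x ∧ tgt f = y) (tgt e) (src e))
    (hH' : ∀ e ∈ H', Relation.ReflTransGen
      (fun x y : V => ∃ f ∈ H', src f = x ∧ tgt f = y) (tgt e) (src e)) :
    genus src tgt H' < genus src tgt H :=
  stmt_12_general src tgt H' H hss hH
end

section
/- Let G be a finite directed graph with signed incidence matrix M, and let H be a cut subgraph of G with coherent acyclic orientation induced by G; that is, there is an ordered partition V(G) = V_1 ⊔ ⋯ ⊔ V_s such that the edges of H are exactly the edges between distinct parts, each oriented from the smaller-indexed part to the larger. Then for every edge e ∈ H there exists z_e ∈ (ℤ_{≥0})^{E(H)} (supported on edges of H) such that e + z_e ∈ Row(M) ∩ ℤ^E. -/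
section

variable {V E : Type*} [Fintype V] [DecidableEq V] (src tgt : E → V)

def enteringEdges (U : Set V) : Set E := {f | src f ∉ U ∧ tgt f ∈ U}

theorem vecMul_signedInc (y : V → ℝ) :
    Matrix.vecMul y (signedInc src tgt) = fun f => y (tgt f) - y (src f) := by
  funext f
  simp [Matrix.vecMul, dotProduct, signedInc, mul_sub, Finset.sum_sub_distrib]

theorem vecMul_indicator_signedInc {U : Set V} (hU : ∀ f, src f ∈ U → tgt f ∈ U) :
    Matrix.vecMul (U.indicator 1) (signedInc src tgt) =
      (enteringEdges src tgt U).indicator 1 := by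
  rw [vecMul_signedInc]
  funext f
  by_cases hs : src f ∈ U
  · simp [enteringEdges, hs, hU f hs]
  · by_cases ht : tgt f ∈ U <;> simp [enteringEdges, hs, ht]

end

theorem stmt_16_general {V E : Type*} [Fintype V] [DecidableEq V] [DecidableEq E]
    (src tgt : E → V) (H : Set E) (p : V → ℕ)
    (hcut : ∀ e : E, e ∈ H ↔ p (src e) ≠ p (tgt e))
    (hco : ∀ e ∈ H, p (src e) < p (tgt e)) :
    ∀ e ∈ H, ∃ z : E → ℤ, (∀ f, 0 ≤ z f) ∧ (∀ f, f ∉ H → z f = 0) ∧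
      ∃ y : V → ℝ, Matrix.vecMul y (signedInc src tgt) =
        fun f => (if f = e then (1 : ℝ) else 0) + (z f : ℝ) := by
  intro e he
  have hle (f : E) : p (src f) ≤ p (tgt f) := by
    by_cases hf : f ∈ H
    · exact (hco f hf).le
    · exact (not_not.mp (mt (hcut f).mpr hf)).le
  set U : Set V := {v | p (src e) < p v}
  have hU (f : E) (hf : src f ∈ U) : tgt f ∈ U := lt_of_lt_of_le hf (hle f)
  set S := enteringEdges src tgt U with hS
  have heS : e ∈ S := ⟨(lt_irrefl (p (src e)) :), hco e he⟩
  have hSH : S ⊆ H := fun f hf =>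
    (hcut f).mpr (lt_of_le_of_lt (not_lt.mp hf.1) hf.2).ne
  refine ⟨(S \ {e}).indicator 1, fun f => Set.indicator_nonneg (fun _ _ => zero_le_one) f,
    fun f hf => Set.indicator_of_notMem (fun hfS => hf (hSH hfS.1)) 1, U.indicator 1, ?_⟩
  rw [vecMul_indicator_signedInc src tgt hU, ← hS]
  funext f
  by_cases hfe : f = e
  · subst hfe; simp [heS]
  · by_cases hfS : f ∈ S <;> simp [hfe, hfS]

/-- Let H be a cut subgraph of G with coherent acyclic orientation:
there is an ordered partition of the vertices (recorded by p : V → ℕ) such that H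
consists exactly of the edges between distinct parts, each oriented from the
smaller-indexed part to the larger. Then for every e ∈ H there is a nonnegative
integer vector z_e supported on H with e + z_e ∈ Row(M) ∩ ℤ^E, the lattice of
integer cuts. -/
theorem stmt_16 {V E : Type*} [Fintype V] [Fintype E] [DecidableEq V] [DecidableEq E]
    (src tgt : E → V) (H : Set E) (p : V → ℕ)
    (hcut : ∀ e : E, e ∈ H ↔ p (src e) ≠ p (tgt e))
    (hco : ∀ e ∈ H, p (src e) < p (tgt e)) :
    ∀ e ∈ H, ∃ z : E → ℤ, (∀ f, 0 ≤ z f) ∧ (∀ f, f ∉ H → z f = 0) ∧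
      ∃ y : V → ℝ, Matrix.vecMul y (signedInc src tgt) =
        fun f => (if f = e then (1 : ℝ) else 0) + (z f : ℝ) :=
  stmt_16_general src tgt H p hcut hco
end

section
/- Let G be a finite directed graph with signed incidence matrix M whose row indexed by vertex w is r_w. Suppose c = Σ_w a_w r_w with integer coefficients a_w, and suppose c = e + z where e is the standard basis vector of an edge e = (u,v) and z ∈ (ℤ_{≥0})^E is supported on a fixed edge set N containing e. Then: (1) for any non-loop edge f = (u',v') not in N, a_{u'} = a_{v'}; and (2) a_u < a_v. -/
theorem sum_mul_signedInc {V E : Type*} [Fintype V] [DecidableEq V] (src tgt : E → V)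
    (x : V → ℝ) (f : E) :
    ∑ w, x w * signedInc src tgt w f = x (tgt f) - x (src f) := by
  simp [signedInc, mul_sub, Finset.sum_sub_distrib, mul_ite]

theorem stmt_17_general {V E : Type*} [Fintype V] [DecidableEq V] [DecidableEq E]
    (src tgt : E → V) (a : V → ℤ) (e₀ : E) (z : E → ℤ) (N : Set E)
    (hz : ∀ f, 0 ≤ z f) (hzsupp : ∀ f, f ∉ N → z f = 0) (he₀ : e₀ ∈ N)
    (hc : ∀ f : E, (∑ w, (a w : ℝ) * signedInc src tgt w f) =
      (if f = e₀ then (1 : ℝ) else 0) + (z f : ℝ)) :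
    (∀ f : E, f ∉ N → src f ≠ tgt f → a (src f) = a (tgt f)) ∧
      a (src e₀) < a (tgt e₀) := by
  have hdiff (f : E) : a (tgt f) - a (src f) = (if f = e₀ then 1 else 0) + z f := by
    have h := hc f
    rw [sum_mul_signedInc] at h
    exact_mod_cast h
  refine ⟨fun f hf _ => ?_, ?_⟩
  · have hne : f ≠ e₀ := fun h => hf (h ▸ he₀)
    have h := hdiff f
    rw [if_neg hne, hzsupp f hf] at h
    omega
  · have h := hdiff e₀
    rw [if_pos rfl] at h
    linarith [hz e₀]

/-- Suppose c = Σ_w a_w r_w with integer coefficients a_w, and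
c = e₀ + z with z a nonnegative integer vector supported on a set N containing e₀.
Then (1) for every non-loop edge f ∉ N the potentials at its endpoints agree,
a(src f) = a(tgt f); and (2) a(src e₀) < a(tgt e₀). -/
theorem stmt_17 {V E : Type*} [Fintype V] [Fintype E] [DecidableEq V] [DecidableEq E]
    (src tgt : E → V) (a : V → ℤ) (e₀ : E) (z : E → ℤ) (N : Set E)
    (hz : ∀ f, 0 ≤ z f) (hzsupp : ∀ f, f ∉ N → z f = 0) (he₀ : e₀ ∈ N)
    (hc : ∀ f : E, (∑ w, (a w : ℝ) * signedInc src tgt w f) =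
      (if f = e₀ then (1 : ℝ) else 0) + (z f : ℝ)) :
    (∀ f : E, f ∉ N → src f ≠ tgt f → a (src f) = a (tgt f)) ∧
      a (src e₀) < a (tgt e₀) :=
  stmt_17_general src tgt a e₀ z N hz hzsupp he₀ hc
end

section
/- Let G be a finite directed graph with signed incidence matrix M, and let H ⊆ E(G) be an edge set such that for every e ∈ H there exists z_e ∈ (ℤ_{≥0})^H with e + z_e ∈ Row(M) ∩ ℤ^E. Then H is a cut subgraph of G with coherent acyclic orientation: there is an ordered partition V(G) = V_1 ⊔ ⋯ ⊔ V_s such that H consists exactly of the edges between distinct parts, and every edge of H is directed from a smaller-indexed part to a larger-indexed part. -/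
/-!
Each hypothesis `e + z_e = yᵀ M` says that the potential `y` increases weakly along every edge,
strictly along `e`, and is constant along edges outside `H`. Summing these potentials over
`e ∈ H` gives one potential `q` that is constant exactly off `H` and strictly increasing along
every edge of `H`; the parts `V_i` are the level sets of `q`, indexed by the rank of the level.
-/

open Finset

/-- The cut vector `f ↦ y (tgt f) - y (src f)` of `y` is nonnegative and supported on `H`. -/
structure IsCutPotential {V E : Type*} (src tgt : E → V) (H : Set E) (y : V → ℝ) : Prop where
  eq_of_notMem : ∀ f ∉ H, y (src f) = y (tgt f)
  le : ∀ f, y (src f) ≤ y (tgt f)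

section Potentials

variable {V E : Type*} (src tgt : E → V)

lemma vecMul_signedInc_apply [Fintype V] [DecidableEq V] (y : V → ℝ) (f : E) :
    Matrix.vecMul y (signedInc src tgt) f = y (tgt f) - y (src f) := by
  simp [Matrix.vecMul, dotProduct, signedInc, mul_sub, Finset.sum_sub_distrib]

lemma isCutPotential_of_vecMul_eq [Fintype V] [DecidableEq V] [DecidableEq E] {H : Set E}
    {e : E} (he : e ∈ H) {z : E → ℝ} (hz : ∀ f, 0 ≤ z f) (hzH : ∀ f ∉ H, z f = 0)
    {y : V → ℝ}
    (hy : Matrix.vecMul y (signedInc src tgt) = fun f => (if f = e then 1 else 0) + z f) :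
    IsCutPotential src tgt H y ∧ y (src e) < y (tgt e) := by
  have hdiff (f : E) : y (tgt f) - y (src f) = (if f = e then 1 else 0) + z f := by
    rw [← vecMul_signedInc_apply, hy]
  refine ⟨⟨fun f hf => ?_, fun f => ?_⟩, ?_⟩
  · have hfe : f ≠ e := by rintro rfl; exact hf he
    have hf' := hdiff f
    rw [if_neg hfe, hzH f hf] at hf'
    linarith
  · have : (0 : ℝ) ≤ if f = e then 1 else 0 := by split_ifs <;> norm_num
    linarith [hdiff f, hz f]
  · have he' := hdiff e
    rw [if_pos rfl] at he'
    linarith [hz e]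

variable {src tgt} {H : Set E}

lemma IsCutPotential.sum {ι : Type*} (s : Finset ι) {y : ι → V → ℝ}
    (hy : ∀ i ∈ s, IsCutPotential src tgt H (y i)) :
    IsCutPotential src tgt H (∑ i ∈ s, y i) where
  eq_of_notMem f hf := by
    simp only [Finset.sum_apply]
    exact Finset.sum_congr rfl fun i hi => (hy i hi).eq_of_notMem f hf
  le f := by
    simp only [Finset.sum_apply]
    exact Finset.sum_le_sum fun i hi => (hy i hi).le f

lemma IsCutPotential.sum_lt {ι : Type*} {s : Finset ι} {y : ι → V → ℝ}
    (hy : ∀ i ∈ s, IsCutPotential src tgt H (y i)) {f : E} {i : ι} (hi : i ∈ s)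
    (hlt : y i (src f) < y i (tgt f)) :
    (∑ i ∈ s, y i) (src f) < (∑ i ∈ s, y i) (tgt f) := by
  simp only [Finset.sum_apply]
  exact Finset.sum_lt_sum (fun j hj => (hy j hj).le f) ⟨i, hi, hlt⟩

end Potentials

lemma card_filter_lt_lt_card_filter_lt_iff {α β : Type*} [Fintype α] [LinearOrder β]
    (q : α → β) {a b : α} : #{w | q w < q a} < #{w | q w < q b} ↔ q a < q b := by
  constructor
  · intro hcard
    by_contra! hba
    refine hcard.not_ge (Finset.card_le_card fun w hw => ?_)
    simp only [Finset.mem_filter, Finset.mem_univ, true_and] at hw ⊢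
    exact hw.trans_le hba
  · intro hab
    refine Finset.card_lt_card ⟨fun w hw => ?_, fun hsub => ?_⟩
    · simp only [Finset.mem_filter, Finset.mem_univ, true_and] at hw ⊢
      exact hw.trans hab
    · simpa using hsub (by simpa using hab : a ∈ _)

lemma exists_ordered_partition_of_potential {V E : Type*} [Fintype V] (src tgt : E → V)
    {H : Set E} {q : V → ℝ} (hq : IsCutPotential src tgt H q)
    (hlt : ∀ f ∈ H, q (src f) < q (tgt f)) :
    ∃ p : V → ℕ, (∀ e : E, e ∈ H ↔ p (src e) ≠ p (tgt e)) ∧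
      ∀ e ∈ H, p (src e) < p (tgt e) := by
  set p : V → ℕ := fun v => #{w | q w < q v}
  have hp_lt (e : E) (he : e ∈ H) : p (src e) < p (tgt e) :=
    (card_filter_lt_lt_card_filter_lt_iff q).2 (hlt e he)
  refine ⟨p, fun e => ⟨fun he => (hp_lt e he).ne, fun hne => ?_⟩, hp_lt⟩
  by_contra he
  exact hne (congrArg (fun x => #{w | q w < x}) (hq.eq_of_notMem e he))

/-- If every edge e of an edge set H admits a nonnegative integer
vector z_e supported on H with e + z_e ∈ Row(M) ∩ ℤ^E (the lattice of integer
cuts), then H is a cut subgraph with coherent acyclic orientation: there is an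
ordered partition of the vertices (recorded by p : V → ℕ) such that H consists
exactly of the edges between distinct parts, every edge of H being directed from a
smaller-indexed part to a larger-indexed one. -/
theorem stmt_18 {V E : Type*} [Fintype V] [Fintype E] [DecidableEq V] [DecidableEq E]
    (src tgt : E → V) (H : Set E)
    (hcut : ∀ e ∈ H, ∃ z : E → ℤ, (∀ f, 0 ≤ z f) ∧ (∀ f, f ∉ H → z f = 0) ∧
      ∃ y : V → ℝ, Matrix.vecMul y (signedInc src tgt) =
        fun f => (if f = e then (1 : ℝ) else 0) + (z f : ℝ)) :
    ∃ p : V → ℕ, (∀ e : E, e ∈ H ↔ p (src e) ≠ p (tgt e)) ∧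
      ∀ e ∈ H, p (src e) < p (tgt e) := by
  classical
  choose! z hz hzH y hy using hcut
  have hpot (e : E) (he : e ∈ H) :
      IsCutPotential src tgt H (y e) ∧ y e (src e) < y e (tgt e) :=
    isCutPotential_of_vecMul_eq src tgt he (fun f => Int.cast_nonneg_iff.mpr (hz e he f))
      (fun f hf => by simp [hzH e he f hf]) (hy e he)
  have hmem {e : E} : e ∈ H.toFinset ↔ e ∈ H := Set.mem_toFinset
  refine exists_ordered_partition_of_potential src tgt
    (IsCutPotential.sum _ fun e he => (hpot e (hmem.1 he)).1) fun f hf => ?_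
  exact IsCutPotential.sum_lt (fun e he => (hpot e (hmem.1 he)).1) (hmem.2 hf) (hpot f hf).2
end
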